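/- arXiv:1808.09867 — 2 statements merged into one kernel-verified Lean document; each statement's English description precedes it below -/
import Mathlib

section
/- Let T > 0, d ∈ ℕ, and let X : [0,T] × ℝ^d → ℝ^d be twice continuously differentiable (jointly in (t,x)) with div X(t,·) = 0 for every t ∈ [0,T], i.e. Σ_i ∂_{x_i} X^i(t,x) = 0 for all (t,x). For (s,t) ∈ Δ_T and x ∈ ℝ^d define the canonical second level 𝕃^i_{st}(x) := Σ_μ ∫_s^t ∂_r X^μ(r,x) (∂_μ X^i(r,x) − ∂_μ X^i(s,x)) dr, and the bracket coefficient V^i_{st}(x) := 𝕃^i_{st}(x) − ½ Σ_μ (X^μ(t,x) − X^μ(s,x)) ∂_μ(X^i(t,x) − X^i(s,x)). Then div V_{st} = Σ_i ∂_{x_i} V^i_{st}(x) = 0 for all (s,t) ∈ Δ_T and all x ∈ ℝ^d. -/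
/-!
Fix `x` and write `A(r)` for the spatial Jacobian `∂_μ X^i(r, x)`. For a divergence-free field
`G`, `div ((a · ∇) G) = tr (Da · DG)`, because the remaining term `a^μ ∂_μ (div G)` vanishes.
Under the integral defining `𝕃_{st}` (with `G = X_r - X_s`, `a = ∂_r X`) this gives the integrand
`tr (Ȧ(r) (A(r) - A(s)))`, the exact derivative of `½ tr A(r)² - tr (A(r) A(s))`, hence
`div 𝕃_{st} = ½ tr ((A(t) - A(s))²)`. With `a = G = X_t - X_s` the same identity gives
`div ((X_{st} · ∇) X_{st}) = tr ((A(t) - A(s))²)`, and the two contributions to `div V_{st}` cancel.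
-/

/-- The `i`-th partial derivative of `f : ℝ^d → ℝ` at `x`. -/
noncomputable def partialD (d : ℕ) (f : (Fin d → ℝ) → ℝ) (i : Fin d)
    (x : Fin d → ℝ) : ℝ :=
  fderiv ℝ f x (Pi.single i 1)

/-- The canonical second level
`𝕃^i_{st}(x) = Σ_μ ∫_s^t ∂_r X^μ(r,x) (∂_μ X^i(r,x) − ∂_μ X^i(s,x)) dr`. -/
noncomputable def canonicalL (d : ℕ) (X : ℝ → (Fin d → ℝ) → Fin d → ℝ)
    (s t : ℝ) (x : Fin d → ℝ) (i : Fin d) : ℝ :=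
  ∑ μ : Fin d, ∫ r in s..t,
    deriv (fun u => X u x μ) r *
      (partialD d (fun y => X r y i) μ x - partialD d (fun y => X s y i) μ x)

/-- The bracket coefficient
`V^i_{st}(x) = 𝕃^i_{st}(x) − ½ Σ_μ X^μ_{st}(x) ∂_μ X^i_{st}(x)`. -/
noncomputable def bracketCoeff (d : ℕ) (X : ℝ → (Fin d → ℝ) → Fin d → ℝ)
    (s t : ℝ) (x : Fin d → ℝ) (i : Fin d) : ℝ :=
  canonicalL d X s t x i -
    (1 / 2) * ∑ μ : Fin d,
      (X t x μ - X s x μ) * partialD d (fun y => X t y i - X s y i) μ x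

open MeasureTheory Function

section Calculus

variable {E F : Type*} [NormedAddCommGroup E] [NormedSpace ℝ E]
  [NormedAddCommGroup F] [NormedSpace ℝ F]

theorem ContDiff.of_uncurry {n : WithTop ℕ∞} {f : ℝ → E → F} (hf : ContDiff ℝ n (uncurry f))
    (r : ℝ) : ContDiff ℝ n (f r) :=
  hf.comp (contDiff_prodMk_right r)

theorem hasFDerivAt_intervalIntegral_of_contDiff [ProperSpace E] {g : ℝ → E → F}
    (hg : ContDiff ℝ 1 (uncurry g)) (s t : ℝ) (x : E) :
    HasFDerivAt (fun y => ∫ r in s..t, g r y) (∫ r in s..t, fderiv ℝ (g r) x) x := by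
  have hcont : Continuous fun p : ℝ × E => fderiv ℝ (g p.1) p.2 :=
    Continuous.fderiv_one (f := fun p : ℝ × E => g p.1)
      (hg.comp (contDiff_fst.comp contDiff_fst |>.prodMk contDiff_snd)) continuous_snd
  obtain ⟨M, hM⟩ := ((isCompact_uIcc (a := s) (b := t)).prod
    (isCompact_closedBall x 1)).exists_bound_of_continuousOn hcont.continuousOn
  refine intervalIntegral.hasFDerivAt_integral_of_dominated_of_fderiv_le
    (𝕜 := ℝ) (μ := volume) (F := fun y r => g r y) (F' := fun y r => fderiv ℝ (g r) y)
    (bound := fun _ => M) (Metric.ball_mem_nhds x one_pos) ?_ ?_ ?_ ?_ intervalIntegrable_const ?_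
  · exact .of_forall fun y =>
      (hg.continuous.comp (continuous_id.prodMk continuous_const)).aestronglyMeasurable
  · exact (hg.continuous.comp (continuous_id.prodMk continuous_const)).intervalIntegrable s t
  · exact (hcont.comp (continuous_id.prodMk continuous_const)).aestronglyMeasurable
  · exact .of_forall fun r hr y hy =>
      hM (r, y) ⟨Set.uIoc_subset_uIcc hr, Metric.ball_subset_closedBall hy⟩
  · exact .of_forall fun r _ y _ =>
      ((hg.of_uncurry r).differentiable one_ne_zero y).hasFDerivAt

theorem hasDerivAt_fderiv_apply_of_contDiff_uncurry {f : ℝ → E → F}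
    (hf : ContDiff ℝ 2 (uncurry f)) (r : ℝ) (x v : E) :
    HasDerivAt (fun u => fderiv ℝ (f u) x v)
      (fderiv ℝ (fun y => deriv (fun u => f u y) r) x v) r := by
  have hdiff : Differentiable ℝ (uncurry f) := hf.differentiable (by norm_num)
  have hdiff' : Differentiable ℝ (fderiv ℝ (uncurry f)) :=
    (hf.fderiv_right (m := 1) (by norm_num)).differentiable one_ne_zero
  have slice_snd (u : ℝ) (y : E) :
      fderiv ℝ (f u) y = (fderiv ℝ (uncurry f) (u, y)).comp (.inr ℝ ℝ E) :=
    ((hdiff (u, y)).hasFDerivAt.comp y (hasFDerivAt_prodMk_right u y)).fderiv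
  have slice_fst (u : ℝ) (y : E) :
      deriv (fun u => f u y) u = fderiv ℝ (uncurry f) (u, y) (1, 0) :=
    HasDerivAt.deriv <| (hdiff (u, y)).hasFDerivAt.comp_hasDerivAt (f := fun u => (u, y)) u
      ((hasDerivAt_id u).prodMk (hasDerivAt_const u y))
  have hsymm : fderiv ℝ (fderiv ℝ (uncurry f)) (r, x) (1, 0) (0, v) =
      fderiv ℝ (fderiv ℝ (uncurry f)) (r, x) (0, v) (1, 0) :=
    hf.contDiffAt.isSymmSndFDerivAt (by simp) _ _
  simp only [slice_snd, slice_fst, ContinuousLinearMap.comp_apply, ContinuousLinearMap.inr_apply]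
  have htime : HasDerivAt (fun u => fderiv ℝ (uncurry f) (u, x))
      (fderiv ℝ (fderiv ℝ (uncurry f)) (r, x) (1, 0)) r :=
    (hdiff' (r, x)).hasFDerivAt.comp_hasDerivAt (f := fun u => (u, x)) r
      ((hasDerivAt_id r).prodMk (hasDerivAt_const r x))
  have hspace : HasFDerivAt (fun y => fderiv ℝ (uncurry f) (r, y))
      ((fderiv ℝ (fderiv ℝ (uncurry f)) (r, x)).comp (.inr ℝ ℝ E)) x :=
    (hdiff' (r, x)).hasFDerivAt.comp x (hasFDerivAt_prodMk_right r x)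
  rw [(hspace.clm_apply (hasFDerivAt_const ((1 : ℝ), (0 : E)) x)).fderiv]
  simpa [hsymm] using htime.clm_apply (hasDerivAt_const r ((0 : ℝ), v))

theorem fderiv_fderiv_apply_comm {G : E → F} (hG : ContDiff ℝ 2 G) (x v w : E) :
    fderiv ℝ (fun y => fderiv ℝ G y v) x w = fderiv ℝ (fun y => fderiv ℝ G y w) x v := by
  have hdiff : DifferentiableAt ℝ (fderiv ℝ G) x :=
    (hG.fderiv_right (m := 1) (by norm_num)).differentiable one_ne_zero x
  rw [fderiv_clm_apply hdiff (differentiableAt_const v),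
    fderiv_clm_apply hdiff (differentiableAt_const w)]
  simpa using hG.contDiffAt.isSymmSndFDerivAt (by simp) w v

end Calculus

theorem Matrix.hasDerivAt_trace_mul {n : Type*} [Fintype n] {A B : ℝ → Matrix n n ℝ}
    {A' B' : Matrix n n ℝ} {r : ℝ} (hA : ∀ i j, HasDerivAt (fun u => A u i j) (A' i j) r)
    (hB : ∀ i j, HasDerivAt (fun u => B u i j) (B' i j) r) :
    HasDerivAt (fun u => (A u * B u).trace) (A' * B r + A r * B').trace r := by
  have := HasDerivAt.fun_sum (u := Finset.univ) fun i _ =>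
    HasDerivAt.fun_sum (u := Finset.univ) fun j _ => (hA i j).mul (hB j i)
  simpa [Matrix.trace, Matrix.mul_apply, Finset.sum_add_distrib] using this

section VectorCalculus

variable {d : ℕ}

noncomputable def jacobian (V : (Fin d → ℝ) → Fin d → ℝ) (x : Fin d → ℝ) :
    Matrix (Fin d) (Fin d) ℝ :=
  Matrix.of fun i j => partialD d (fun y => V y i) j x

noncomputable def divergence (V : (Fin d → ℝ) → Fin d → ℝ) (x : Fin d → ℝ) : ℝ :=
  (jacobian V x).trace

theorem divergence_eq_sum (V : (Fin d → ℝ) → Fin d → ℝ) (x : Fin d → ℝ) :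
    divergence V x = ∑ i, partialD d (fun y => V y i) i x :=
  rfl

/-- `(a · ∇) G`, the composition `a ∘ G` of vector fields in `[B] = B² - ½ B¹ ∘ B¹`. -/
noncomputable def derivAlong (a G : (Fin d → ℝ) → Fin d → ℝ) : (Fin d → ℝ) → Fin d → ℝ :=
  fun y i => ∑ μ, a y μ * partialD d (fun z => G z i) μ y

theorem HasFDerivAt.partialD_eq {f : (Fin d → ℝ) → ℝ} {f' : (Fin d → ℝ) →L[ℝ] ℝ}
    {x : Fin d → ℝ} (hf : HasFDerivAt f f' x) (i : Fin d) :
    partialD d f i x = f' (Pi.single i 1) := by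
  rw [partialD, hf.fderiv]

theorem continuous_partialD_of_contDiff_uncurry {f : ℝ → (Fin d → ℝ) → ℝ}
    (hf : ContDiff ℝ 1 (uncurry f)) (i : Fin d) (x : Fin d → ℝ) :
    Continuous fun r => partialD d (f r) i x :=
  (Continuous.fderiv_one hf continuous_const).clm_apply continuous_const

theorem partialD_sub {f g : (Fin d → ℝ) → ℝ} {x : Fin d → ℝ} (hf : DifferentiableAt ℝ f x)
    (hg : DifferentiableAt ℝ g x) (i : Fin d) :
    partialD d (fun y => f y - g y) i x = partialD d f i x - partialD d g i x := by
  simp only [partialD, fderiv_fun_sub hf hg, sub_apply]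

theorem contDiff_partialD {f : (Fin d → ℝ) → ℝ} {n : WithTop ℕ∞} (hf : ContDiff ℝ (n + 1) f)
    (i : Fin d) : ContDiff ℝ n (partialD d f i) :=
  (hf.fderiv_right le_rfl).clm_apply contDiff_const

theorem partialD_partialD_comm {f : (Fin d → ℝ) → ℝ} (hf : ContDiff ℝ 2 f) (i j : Fin d)
    (x : Fin d → ℝ) : partialD d (partialD d f j) i x = partialD d (partialD d f i) j x :=
  fderiv_fderiv_apply_comm hf x _ _

theorem jacobian_sub {V W : (Fin d → ℝ) → Fin d → ℝ} {x : Fin d → ℝ}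
    (hV : DifferentiableAt ℝ V x) (hW : DifferentiableAt ℝ W x) :
    jacobian (V - W) x = jacobian V x - jacobian W x := by
  ext i j
  exact partialD_sub (differentiableAt_pi.1 hV i) (differentiableAt_pi.1 hW i) j

theorem jacobian_smul {V : (Fin d → ℝ) → Fin d → ℝ} {x : Fin d → ℝ}
    (hV : DifferentiableAt ℝ V x) (c : ℝ) :
    jacobian (c • V) x = c • jacobian V x := by
  ext i j
  simp only [jacobian, partialD, Matrix.of_apply, Matrix.smul_apply, Pi.smul_apply,
    smul_eq_mul, fderiv_const_mul (differentiableAt_pi.1 hV i), smul_apply]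

theorem divergence_sub {V W : (Fin d → ℝ) → Fin d → ℝ} {x : Fin d → ℝ}
    (hV : DifferentiableAt ℝ V x) (hW : DifferentiableAt ℝ W x) :
    divergence (V - W) x = divergence V x - divergence W x := by
  rw [divergence, jacobian_sub hV hW, Matrix.trace_sub, divergence, divergence]

theorem divergence_smul {V : (Fin d → ℝ) → Fin d → ℝ} {x : Fin d → ℝ}
    (hV : DifferentiableAt ℝ V x) (c : ℝ) :
    divergence (c • V) x = c * divergence V x := by
  rw [divergence, jacobian_smul hV, Matrix.trace_smul, divergence, smul_eq_mul]

theorem sum_partialD_partialD_eq_zero_of_divergence_eq_zero {G : (Fin d → ℝ) → Fin d → ℝ}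
    (hG : ContDiff ℝ 2 G) (hdiv : ∀ y, divergence G y = 0) (μ : Fin d) (x : Fin d → ℝ) :
    ∑ i, partialD d (partialD d (fun y => G y i) μ) i x = 0 := by
  have hGi (i : Fin d) : ContDiff ℝ 2 fun y => G y i := contDiff_pi.1 hG i
  have hdiv_const : (fun y => ∑ i, partialD d (fun y => G y i) i y) = fun _ => 0 :=
    funext fun y => (divergence_eq_sum G y).symm.trans (hdiv y)
  calc ∑ i, partialD d (partialD d (fun y => G y i) μ) i x
      = ∑ i, partialD d (partialD d (fun y => G y i) i) μ x :=
        Finset.sum_congr rfl fun i _ => partialD_partialD_comm (hGi i) i μ x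
    _ = partialD d (fun y => ∑ i, partialD d (fun y => G y i) i y) μ x := by
        have hderiv := HasFDerivAt.fun_sum (u := Finset.univ) fun i _ =>
          ((contDiff_partialD (n := 1) (hGi i) i).differentiable one_ne_zero x).hasFDerivAt
        rw [hderiv.partialD_eq]
        simp [partialD]
    _ = 0 := by rw [hdiv_const]; simp [partialD]

theorem differentiableAt_derivAlong {a G : (Fin d → ℝ) → Fin d → ℝ} {x : Fin d → ℝ}
    (ha : DifferentiableAt ℝ a x) (hG : ContDiff ℝ 2 G) :
    DifferentiableAt ℝ (derivAlong a G) x :=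
  differentiableAt_pi.2 fun i => DifferentiableAt.fun_sum fun μ _ =>
    (differentiableAt_pi.1 ha μ).mul
      ((contDiff_partialD (n := 1) (contDiff_pi.1 hG i) μ).differentiable one_ne_zero x)

theorem divergence_derivAlong {a G : (Fin d → ℝ) → Fin d → ℝ} {x : Fin d → ℝ}
    (ha : DifferentiableAt ℝ a x) (hG : ContDiff ℝ 2 G) (hdiv : ∀ y, divergence G y = 0) :
    divergence (derivAlong a G) x = (jacobian a x * jacobian G x).trace := by
  have hterm (i : Fin d) : partialD d (fun y => derivAlong a G y i) i x =
      ∑ μ, (jacobian a x μ i * jacobian G x i μ +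
        a x μ * partialD d (partialD d (fun y => G y i) μ) i x) := by
    have hderiv := HasFDerivAt.fun_sum (u := Finset.univ) fun μ _ =>
      (differentiableAt_pi.1 ha μ).hasFDerivAt.fun_mul
        ((contDiff_partialD (n := 1) (contDiff_pi.1 hG i) μ).differentiable one_ne_zero x
          |>.hasFDerivAt)
    refine (hderiv.partialD_eq i).trans ?_
    simp [jacobian, partialD, add_comm, mul_comm]
  calc divergence (derivAlong a G) x
      = ∑ i, ∑ μ, (jacobian a x μ i * jacobian G x i μ +
          a x μ * partialD d (partialD d (fun y => G y i) μ) i x) :=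
        (divergence_eq_sum _ x).trans (Finset.sum_congr rfl fun i _ => hterm i)
    _ = ∑ μ, ∑ i, jacobian a x μ i * jacobian G x i μ +
          ∑ μ, a x μ * ∑ i, partialD d (partialD d (fun y => G y i) μ) i x := by
        simp only [Finset.sum_add_distrib, Finset.mul_sum]
        rw [Finset.sum_comm, Finset.sum_comm (f := fun i μ => a x μ * _)]
    _ = (jacobian a x * jacobian G x).trace := by
        simp [sum_partialD_partialD_eq_zero_of_divergence_eq_zero hG hdiv, Matrix.trace,
          Matrix.mul_apply]

theorem divergence_sub_eq_zero {V W : (Fin d → ℝ) → Fin d → ℝ} (hV : Differentiable ℝ V)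
    (hW : Differentiable ℝ W) (hdivV : ∀ y, divergence V y = 0)
    (hdivW : ∀ y, divergence W y = 0) (y : Fin d → ℝ) : divergence (V - W) y = 0 := by
  rw [divergence_sub (hV y) (hW y), hdivV, hdivW, sub_self]

theorem contDiff_uncurry_derivAlong {a G : ℝ → (Fin d → ℝ) → Fin d → ℝ}
    (ha : ContDiff ℝ 1 (uncurry a)) (hG : ContDiff ℝ 2 (uncurry G)) :
    ContDiff ℝ 1 (uncurry fun r => derivAlong (a r) (G r)) :=
  contDiff_pi.2 fun i => ContDiff.sum (s := Finset.univ) fun μ _ => (contDiff_pi.1 ha μ).mul <|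
    ContDiff.fderiv_apply (f := fun (p : ℝ × (Fin d → ℝ)) z => G p.1 z i)
      ((contDiff_pi.1 hG i).comp ((contDiff_fst.comp contDiff_fst).prodMk contDiff_snd))
      contDiff_snd (contDiff_const (c := Pi.single μ 1)) le_rfl

variable {g : ℝ → (Fin d → ℝ) → Fin d → ℝ}

theorem continuous_divergence_of_contDiff_uncurry (hg : ContDiff ℝ 1 (uncurry g))
    (x : Fin d → ℝ) : Continuous fun r => divergence (g r) x :=
  continuous_finsetSum Finset.univ fun i _ =>
    continuous_partialD_of_contDiff_uncurry (f := fun r y => g r y i) (contDiff_pi.1 hg i) i x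

theorem differentiableAt_intervalIntegral_pi (hg : ContDiff ℝ 1 (uncurry g)) (s t : ℝ)
    (x : Fin d → ℝ) : DifferentiableAt ℝ (fun y i => ∫ r in s..t, g r y i) x :=
  differentiableAt_pi.2 fun i =>
    (hasFDerivAt_intervalIntegral_of_contDiff (contDiff_pi.1 hg i) s t x).differentiableAt

theorem divergence_intervalIntegral (hg : ContDiff ℝ 1 (uncurry g)) (s t : ℝ)
    (x : Fin d → ℝ) :
    divergence (fun y i => ∫ r in s..t, g r y i) x = ∫ r in s..t, divergence (g r) x := by
  have hgi (i : Fin d) : ContDiff ℝ 1 (uncurry fun r y => g r y i) := contDiff_pi.1 hg i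
  simp only [divergence_eq_sum]
  rw [intervalIntegral.integral_finsetSum fun i _ =>
    (continuous_partialD_of_contDiff_uncurry (hgi i) i x).intervalIntegrable s t]
  refine Finset.sum_congr rfl fun i _ => ?_
  rw [(hasFDerivAt_intervalIntegral_of_contDiff (hgi i) s t x).partialD_eq,
    ContinuousLinearMap.intervalIntegral_apply
      ((Continuous.fderiv_one (hgi i) continuous_const).intervalIntegrable s t)]
  rfl

end VectorCalculus

section CanonicalLift

variable {d : ℕ} {X : ℝ → (Fin d → ℝ) → Fin d → ℝ}

noncomputable def timeDeriv (X : ℝ → (Fin d → ℝ) → Fin d → ℝ) (r : ℝ) (y : Fin d → ℝ) :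
    Fin d → ℝ :=
  fun μ => deriv (fun u => X u y μ) r

theorem contDiff_uncurry_timeDeriv {n : WithTop ℕ∞} (hX : ContDiff ℝ (n + 1) (uncurry X)) :
    ContDiff ℝ n (uncurry (timeDeriv X)) :=
  contDiff_pi.2 fun μ => ContDiff.fderiv_apply (f := fun (p : ℝ × (Fin d → ℝ)) u => X u p.2 μ)
    ((contDiff_pi.1 hX μ).comp (contDiff_snd.prodMk (contDiff_snd.comp contDiff_fst)))
    contDiff_fst contDiff_const le_rfl

theorem contDiff_uncurry_derivAlong_timeDeriv (hX : ContDiff ℝ 2 (uncurry X)) (s : ℝ) :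
    ContDiff ℝ 1 (uncurry fun r => derivAlong (timeDeriv X r) (X r - X s)) :=
  contDiff_uncurry_derivAlong (contDiff_uncurry_timeDeriv hX)
    (hX.sub (hX.comp (contDiff_const.prodMk contDiff_snd)))

theorem canonicalL_eq_intervalIntegral (hX : ContDiff ℝ 2 (uncurry X)) (s t : ℝ)
    (y : Fin d → ℝ) (i : Fin d) :
    canonicalL d X s t y i = ∫ r in s..t, derivAlong (timeDeriv X r) (X r - X s) y i := by
  have hcont (μ : Fin d) : Continuous fun r => deriv (fun u => X u y μ) r *
      (partialD d (fun z => X r z i) μ y - partialD d (fun z => X s z i) μ y) :=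
    ((continuous_apply μ).comp ((contDiff_uncurry_timeDeriv (n := 1) hX).continuous.comp
      (continuous_id.prodMk continuous_const))).mul
      ((continuous_partialD_of_contDiff_uncurry (f := fun r z => X r z i)
        ((contDiff_pi.1 hX i).of_le one_le_two) μ y).sub continuous_const)
  rw [canonicalL, ← intervalIntegral.integral_finsetSum fun μ _ =>
    (hcont μ).intervalIntegrable s t]
  refine intervalIntegral.integral_congr fun r _ => Finset.sum_congr rfl fun μ _ => ?_
  simp only [Pi.sub_apply]
  rw [partialD_sub ((contDiff_pi.1 (hX.of_uncurry r) i).differentiable two_ne_zero y)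
    ((contDiff_pi.1 (hX.of_uncurry s) i).differentiable two_ne_zero y)]
  rfl

theorem differentiable_canonicalL (hX : ContDiff ℝ 2 (uncurry X)) (s t : ℝ) :
    Differentiable ℝ fun y i => canonicalL d X s t y i := by
  simp_rw [canonicalL_eq_intervalIntegral hX]
  exact differentiableAt_intervalIntegral_pi (contDiff_uncurry_derivAlong_timeDeriv hX s) s t

theorem divergence_canonicalL (hX : ContDiff ℝ 2 (uncurry X)) {s t : ℝ} (hst : s ≤ t)
    (hdiv : ∀ r ∈ Set.Icc s t, ∀ y, divergence (X r) y = 0) (x : Fin d → ℝ) :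
    divergence (fun y i => canonicalL d X s t y i) x =
      1 / 2 * (jacobian (X t - X s) x * jacobian (X t - X s) x).trace := by
  set J := fun r => jacobian (X r) x
  set J' := fun r => jacobian (timeDeriv X r) x
  have hJ (r : ℝ) (i j : Fin d) : HasDerivAt (fun u => J u i j) (J' r i j) r :=
    hasDerivAt_fderiv_apply_of_contDiff_uncurry (contDiff_pi.1 hX i) r x (Pi.single j 1)
  have hΦ (r : ℝ) : HasDerivAt (fun u => 1 / 2 * (J u * J u).trace - (J u * J s).trace)
      (J' r * (J r - J s)).trace r := by
    have hJs (i j : Fin d) : HasDerivAt (fun _ => J s i j) ((0 : Matrix _ _ ℝ) i j) r :=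
      hasDerivAt_const r _
    refine (((Matrix.hasDerivAt_trace_mul (hJ r) (hJ r)).const_mul (1 / 2)).sub
      (Matrix.hasDerivAt_trace_mul (hJ r) hJs)).congr_deriv ?_
    simp only [Matrix.mul_zero, add_zero, Matrix.mul_sub, Matrix.trace_add, Matrix.trace_sub,
      Matrix.trace_mul_comm (J r) (J' r)]
    ring
  have hdiff (r : ℝ) : Differentiable ℝ (X r) := (hX.of_uncurry r).differentiable two_ne_zero
  have hintegrand (r : ℝ) (hr : r ∈ Set.Icc s t) :
      divergence (derivAlong (timeDeriv X r) (X r - X s)) x = (J' r * (J r - J s)).trace := by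
    rw [divergence_derivAlong (G := X r - X s)
      (((contDiff_uncurry_timeDeriv (n := 1) hX).of_uncurry r).differentiable one_ne_zero x)
      ((hX.of_uncurry r).sub (hX.of_uncurry s))
      (divergence_sub_eq_zero (hdiff r) (hdiff s) (hdiv r hr) (hdiv s ⟨le_rfl, hst⟩)),
      jacobian_sub (hdiff r x) (hdiff s x)]
  simp_rw [canonicalL_eq_intervalIntegral hX]
  rw [divergence_intervalIntegral (contDiff_uncurry_derivAlong_timeDeriv hX s),
    intervalIntegral.integral_eq_sub_of_hasDerivAt_of_le hst
      (HasDerivAt.continuousOn fun r _ => hΦ r)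
      (fun r hr => hintegrand r (Set.Ioo_subset_Icc_self hr) ▸ hΦ r)
      ((continuous_divergence_of_contDiff_uncurry
        (contDiff_uncurry_derivAlong_timeDeriv hX s) x).intervalIntegrable s t),
    jacobian_sub (hdiff t x) (hdiff s x)]
  simp only [J, Matrix.sub_mul, Matrix.mul_sub, Matrix.trace_sub,
    Matrix.trace_mul_comm (jacobian (X s) x) (jacobian (X t) x)]
  ring

end CanonicalLift

theorem bracket_div_free_general (T : ℝ) (d : ℕ)
    (X : ℝ → (Fin d → ℝ) → Fin d → ℝ)
    (hX : ContDiff ℝ 2 (fun p : ℝ × (Fin d → ℝ) => X p.1 p.2))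
    (hdiv : ∀ t ∈ Set.Icc (0 : ℝ) T, ∀ x : Fin d → ℝ,
      ∑ i : Fin d, partialD d (fun y => X t y i) i x = 0) :
    ∀ s t : ℝ, 0 ≤ s → s ≤ t → t ≤ T → ∀ x : Fin d → ℝ,
      ∑ i : Fin d, partialD d (fun y => bracketCoeff d X s t y i) i x = 0 := by
  intro s t hs hst htT x
  have hX' : ContDiff ℝ 2 (uncurry X) := hX
  have hdiv' : ∀ r ∈ Set.Icc s t, ∀ y, divergence (X r) y = 0 :=
    fun r hr => hdiv r ⟨hs.trans hr.1, hr.2.trans htT⟩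
  have hXst : ContDiff ℝ 2 (X t - X s) := (hX'.of_uncurry t).sub (hX'.of_uncurry s)
  have hdivst : ∀ y, divergence (X t - X s) y = 0 :=
    divergence_sub_eq_zero ((hX'.of_uncurry t).differentiable two_ne_zero)
      ((hX'.of_uncurry s).differentiable two_ne_zero) (hdiv' t ⟨hst, le_rfl⟩)
      (hdiv' s ⟨le_rfl, hst⟩)
  have hQ := differentiableAt_derivAlong (hXst.differentiable two_ne_zero x) hXst
  change divergence ((fun y i => canonicalL d X s t y i) -
    (1 / 2 : ℝ) • derivAlong (X t - X s) (X t - X s)) x = 0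
  rw [divergence_sub (differentiable_canonicalL hX' s t x) (hQ.const_smul _),
    divergence_smul hQ, divergence_canonicalL hX' hst hdiv' x,
    divergence_derivAlong (hXst.differentiable two_ne_zero x) hXst hdivst, sub_self]

/-- If `X : [0,T] × ℝ^d → ℝ^d` is `C²` (jointly) and divergence free in space for
every `t ∈ [0,T]`, then the bracket coefficient of its canonical lift is also
divergence free: `Σ_i ∂_{x_i} V^i_{st}(x) = 0` for all `(s,t) ∈ Δ_T` and `x ∈ ℝ^d`. -/
theorem bracket_div_free (T : ℝ) (hT : 0 < T) (d : ℕ)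
    (X : ℝ → (Fin d → ℝ) → Fin d → ℝ)
    (hX : ContDiff ℝ 2 (fun p : ℝ × (Fin d → ℝ) => X p.1 p.2))
    (hdiv : ∀ t ∈ Set.Icc (0 : ℝ) T, ∀ x : Fin d → ℝ,
      ∑ i : Fin d, partialD d (fun y => X t y i) i x = 0) :
    ∀ s t : ℝ, 0 ≤ s → s ≤ t → t ≤ T → ∀ x : Fin d → ℝ,
      ∑ i : Fin d, partialD d (fun y => bracketCoeff d X s t y i) i x = 0 :=
  bracket_div_free_general T d X hX hdiv
end

section
/- Let k be a field (or commutative ring), let V and W be k-modules, and let T > 0. Suppose A¹, A² : Δ_T → End_k(V) satisfy δA¹_{sθt} = 0 and δA²_{sθt} = A¹_{θt} ∘ A¹_{sθ} for all 0 ≤ s ≤ θ ≤ t ≤ T, and C¹, C² : Δ_T → End_k(W) satisfy δC¹_{sθt} = 0 and δC²_{sθt} = C¹_{sθ} ∘ C¹_{θt} for all 0 ≤ s ≤ θ ≤ t ≤ T. Define Γ¹, Γ² : Δ_T → End_k(V ⊗ W) by Γ¹_{st} := A¹_{st} ⊗ id_W − id_V ⊗ C¹_{st} and Γ²_{st} :=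 A²_{st} ⊗ id_W − A¹_{st} ⊗ C¹_{st} + id_V ⊗ (C¹_{st} ∘ C¹_{st} − C²_{st}). Then Γ¹, Γ² satisfy the forward Chen relations: δΓ¹_{sθt} = 0 and δΓ²_{sθt} = Γ¹_{θt} ∘ Γ¹_{sθ} for all 0 ≤ s ≤ θ ≤ t ≤ T. -/
open TensorProduct

/-- **Chen relations for the tensor driver.** If `A¹, A²` satisfy the forward Chen
relations on `V` and `C¹, C²` satisfy the (backward-type) relations
`δC¹ = 0`, `δC²_{sθt} = C¹_{sθ} ∘ C¹_{θt}` on `W`, then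
`Γ¹_{st} = A¹_{st} ⊗ 1 − 1 ⊗ C¹_{st}` and
`Γ²_{st} = A²_{st} ⊗ 1 − A¹_{st} ⊗ C¹_{st} + 1 ⊗ (C¹_{st} ∘ C¹_{st} − C²_{st})`
satisfy the forward Chen relations on `V ⊗ W`. -/
theorem tensor_chen {k : Type*} [CommRing k] {V W : Type*}
    [AddCommGroup V] [Module k V] [AddCommGroup W] [Module k W]
    (T : ℝ) (hT : 0 < T)
    (A1 A2 : ℝ → ℝ → (V →ₗ[k] V)) (C1 C2 : ℝ → ℝ → (W →ₗ[k] W))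
    (hA1 : ∀ s θ t : ℝ, 0 ≤ s → s ≤ θ → θ ≤ t → t ≤ T →
      A1 s t - A1 s θ - A1 θ t = 0)
    (hA2 : ∀ s θ t : ℝ, 0 ≤ s → s ≤ θ → θ ≤ t → t ≤ T →
      A2 s t - A2 s θ - A2 θ t = (A1 θ t) ∘ₗ (A1 s θ))
    (hC1 : ∀ s θ t : ℝ, 0 ≤ s → s ≤ θ → θ ≤ t → t ≤ T →
      C1 s t - C1 s θ - C1 θ t = 0)
    (hC2 : ∀ s θ t : ℝ, 0 ≤ s → s ≤ θ → θ ≤ t → t ≤ T →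
      C2 s t - C2 s θ - C2 θ t = (C1 s θ) ∘ₗ (C1 θ t)) :
    let Γ1 : ℝ → ℝ → (V ⊗[k] W →ₗ[k] V ⊗[k] W) := fun s t =>
      TensorProduct.map (A1 s t) LinearMap.id - TensorProduct.map LinearMap.id (C1 s t)
    let Γ2 : ℝ → ℝ → (V ⊗[k] W →ₗ[k] V ⊗[k] W) := fun s t =>
      TensorProduct.map (A2 s t) LinearMap.id - TensorProduct.map (A1 s t) (C1 s t)
        + TensorProduct.map LinearMap.id ((C1 s t) ∘ₗ (C1 s t) - C2 s t)
    (∀ s θ t : ℝ, 0 ≤ s → s ≤ θ → θ ≤ t → t ≤ T →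
      Γ1 s t - Γ1 s θ - Γ1 θ t = 0) ∧
    (∀ s θ t : ℝ, 0 ≤ s → s ≤ θ → θ ≤ t → t ≤ T →
      Γ2 s t - Γ2 s θ - Γ2 θ t = (Γ1 θ t) ∘ₗ (Γ1 s θ)) := by
  intro Γ1 Γ2
  constructor
  · intro s θ t hs hsθ hθt htT
    have hA := hA1 s θ t hs hsθ hθt htT
    have hC := hC1 s θ t hs hsθ hθt htT
    rw [sub_sub, sub_eq_zero] at hA hC
    apply TensorProduct.ext'
    intro x y
    simp only [Γ1, hA, hC, LinearMap.sub_apply, LinearMap.add_apply, LinearMap.zero_apply,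
      TensorProduct.map_tmul, LinearMap.id_apply, map_add, tmul_add, add_tmul]
    abel
  · intro s θ t hs hsθ hθt htT
    have hA := hA1 s θ t hs hsθ hθt htT
    have hC := hC1 s θ t hs hsθ hθt htT
    have hA' := hA2 s θ t hs hsθ hθt htT
    have hC' := hC2 s θ t hs hsθ hθt htT
    rw [sub_sub, sub_eq_zero] at hA hC
    rw [sub_sub, sub_eq_iff_eq_add] at hA' hC'
    apply TensorProduct.ext'
    intro x y
    simp only [Γ1, Γ2, hA, hC, hA', hC', LinearMap.sub_apply, LinearMap.add_apply,
      LinearMap.comp_apply, LinearMap.coe_comp, Function.comp_apply,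
      TensorProduct.map_tmul, LinearMap.id_apply, map_add, map_sub, tmul_add, add_tmul,
      tmul_sub, sub_tmul]
    abel
end
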